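/- Let n ≥ 2, λ ∈ ℤ^n with λ₁ ≥ λ₂ ≥ … ≥ λ_{n−1} ≥ |λₙ|, and (ν, μ) ∈ τ_{Dₙ}(λ). Then there exists exactly one pair (i, t) where i is a nondecreasing finite list with entries in {1, …, n−1} and t is a nonincreasing finite list with entries in {2, …, n}, such that νⱼ = λⱼ + (the number of entries of i equal to j−1) for every j with 2 ≤ j ≤ n, and μⱼ = νⱼ − (the number of entries of t equal to j) for every j with 2 ≤ j ≤ n. In other words, every element of τ_{Dₙ}(λ) is realized by a unique λ-admissible composite ξ_{+i^m,−t^ℓ} of the lattice raising maps ξ_{+j} (add 1 to coordinate j+1) and lowering maps ξ_{−j} (subtract 1 from coordinate j). -/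

import Mathlib

/-!
The interlacing inequalities `λⱼ ≤ νⱼ` and `μⱼ ≤ νⱼ` make the prescribed multiplicities
`νⱼ - λⱼ` of `j - 1` in `i` and `νⱼ - μⱼ` of `j` in `t` nonnegative. A finite multiset is
determined by its multiplicities, and a list sorted for a total order is determined by its
multiset, so each of `i` and `t` exists and is unique.
-/

open Finset

theorem Multiset.mem_of_mem_sum_replicate {α : Type*} {s : Finset α} {c : α → ℕ} {a : α}
    (h : a ∈ ∑ x ∈ s, Multiset.replicate (c x) x) : a ∈ s := by
  obtain ⟨x, hx, hax⟩ := Multiset.mem_sum.mp h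
  rwa [Multiset.eq_of_mem_replicate hax]

theorem Multiset.count_sum_replicate_of_mem {α : Type*} [DecidableEq α] (s : Finset α)
    (c : α → ℕ) {a : α} (ha : a ∈ s) :
    (∑ x ∈ s, Multiset.replicate (c x) x).count a = c a := by
  rw [Multiset.count_sum', Finset.sum_eq_single_of_mem a ha]
  · exact Multiset.count_replicate_self a (c a)
  · intro x _ hxa
    exact Multiset.count_eq_zero.mpr fun h => hxa (Multiset.eq_of_mem_replicate h).symm

theorem existsUnique_pairwise_count_eq {α : Type*} [DecidableEq α] (r : α → α → Prop)
    [DecidableRel r] [IsTrans α r] [Std.Antisymm r] [Std.Total r]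
    (s : Finset α) (c : α → ℤ) (hc : ∀ a ∈ s, 0 ≤ c a) :
    ∃! L : List α, L.Pairwise r ∧ (∀ a ∈ L, a ∈ s) ∧ ∀ a ∈ s, (L.count a : ℤ) = c a := by
  set m := ∑ x ∈ s, Multiset.replicate (c x).toNat x
  have hm_sub : ∀ a ∈ m.sort r, a ∈ s := fun a ha =>
    Multiset.mem_of_mem_sum_replicate ((Multiset.mem_sort r).mp ha)
  have hm_count : ∀ a ∈ s, ((m.sort r).count a : ℤ) = c a := fun a ha => by
    rw [← Multiset.coe_count, Multiset.sort_eq, Multiset.count_sum_replicate_of_mem s _ ha,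
      Int.toNat_of_nonneg (hc a ha)]
  refine ⟨m.sort r, ⟨Multiset.pairwise_sort m r, hm_sub, hm_count⟩, ?_⟩
  rintro L ⟨hL_sorted, hL_sub, hL_count⟩
  refine (List.perm_iff_count.mpr fun a => ?_).eq_of_pairwise' hL_sorted
    (Multiset.pairwise_sort m r)
  by_cases ha : a ∈ s
  · exact_mod_cast (hL_count a ha).trans (hm_count a ha).symm
  · rw [List.count_eq_zero.mpr (mt (hL_sub a) ha), List.count_eq_zero.mpr (mt (hm_sub a) ha)]

theorem ExistsUnique.prod {α β : Type*} {p : α → Prop} {q : β → Prop}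
    (hp : ∃! a, p a) (hq : ∃! b, q b) : ∃! x : α × β, p x.1 ∧ q x.2 := by
  obtain ⟨a, hpa, hpa_unique⟩ := hp
  obtain ⟨b, hqb, hqb_unique⟩ := hq
  exact ⟨(a, b), ⟨hpa, hqb⟩, fun x hx => Prod.ext (hpa_unique _ hx.1) (hqb_unique _ hx.2)⟩

theorem forall_mem_Icc_count_eq_iff_raise (n : ℕ) (l ν : ℕ → ℤ) (L : List ℕ) :
    (∀ a ∈ Icc 1 (n - 1), (L.count a : ℤ) = ν (a + 1) - l (a + 1)) ↔
      ∀ j, 2 ≤ j → j ≤ n → ν j = l j + (L.count (j - 1) : ℤ) := by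
  constructor
  · intro h j hj2 hjn
    have := h (j - 1) (mem_Icc.mpr ⟨by omega, by omega⟩)
    rw [Nat.sub_add_cancel (by omega)] at this
    linarith
  · intro h a ha
    rw [mem_Icc] at ha
    have := h (a + 1) (by omega) (by omega)
    rw [Nat.add_sub_cancel] at this
    linarith

theorem forall_mem_Icc_count_eq_iff_lower (n : ℕ) (ν μ : ℕ → ℤ) (L : List ℕ) :
    (∀ a ∈ Icc 2 n, (L.count a : ℤ) = ν a - μ a) ↔
      ∀ j, 2 ≤ j → j ≤ n → μ j = ν j - (L.count j : ℤ) :=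
  forall_congr' fun j => by
    rw [mem_Icc]
    exact ⟨fun h hj2 hjn => by linarith [h ⟨hj2, hjn⟩], fun h hj => by linarith [h hj.1 hj.2]⟩

theorem stmt_10_general (n : ℕ) (l ν μ : ℕ → ℤ)
    (h2 : ∀ j, 2 ≤ j → j ≤ n - 1 → l j ≤ ν j)
    (h4 : |l n| ≤ ν n)
    (h5 : ∀ j, 2 ≤ j → j ≤ n - 1 → μ j ≤ ν j)
    (h7 : |μ n| ≤ ν n) :
    ∃! p : List ℕ × List ℕ,
      List.Pairwise (· ≤ ·) p.1 ∧ (∀ x ∈ p.1, 1 ≤ x ∧ x ≤ n - 1) ∧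
      List.Pairwise (· ≥ ·) p.2 ∧ (∀ x ∈ p.2, 2 ≤ x ∧ x ≤ n) ∧
      (∀ j, 2 ≤ j → j ≤ n → ν j = l j + (p.1.count (j - 1) : ℤ)) ∧
      (∀ j, 2 ≤ j → j ≤ n → μ j = ν j - (p.2.count j : ℤ)) := by
  have hlν : ∀ a ∈ Icc 1 (n - 1), 0 ≤ ν (a + 1) - l (a + 1) := by
    intro a ha
    rw [mem_Icc] at ha
    rcases (show a + 1 < n ∨ a + 1 = n by omega) with h | h
    · linarith [h2 (a + 1) (by omega) (by omega)]
    · rw [h]; linarith [le_abs_self (l n)]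
  have hμν : ∀ a ∈ Icc 2 n, 0 ≤ ν a - μ a := by
    intro a ha
    rw [mem_Icc] at ha
    rcases (show a < n ∨ a = n by omega) with h | h
    · linarith [h5 a ha.1 (by omega)]
    · rw [h]; linarith [le_abs_self (μ n)]
  refine (existsUnique_congr fun p => ?_).mp
    ((existsUnique_pairwise_count_eq (· ≤ ·) _ _ hlν).prod
      (existsUnique_pairwise_count_eq (· ≥ ·) _ _ hμν))
  rw [forall_mem_Icc_count_eq_iff_raise, forall_mem_Icc_count_eq_iff_lower]
  simp only [mem_Icc]
  tauto

/-- Unambiguity of the notation ξ_{(μ,ν)} in type Dₙ: every (ν, μ) ∈ τ_{Dₙ}(λ)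
is realized by a unique pair (i, t) of a nondecreasing list i with entries in
{1, …, n−1} and a nonincreasing list t with entries in {2, …, n} such that
νⱼ = λⱼ + #{entries of i equal to j−1} (2 ≤ j ≤ n) and
μⱼ = νⱼ − #{entries of t equal to j} (2 ≤ j ≤ n). -/
theorem stmt_10 (n : ℕ) (hn : 2 ≤ n) (l ν μ : ℕ → ℤ)
    (hdom : ∀ j, 1 ≤ j → j ≤ n - 2 → l (j + 1) ≤ l j) (hlast : |l n| ≤ l (n - 1))
    (h1 : ν 2 ≤ l 1)
    (h2 : ∀ j, 2 ≤ j → j ≤ n - 1 → l j ≤ ν j)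
    (h3 : ∀ j, 2 ≤ j → j ≤ n - 1 → ν (j + 1) ≤ l j)
    (h4 : |l n| ≤ ν n)
    (h5 : ∀ j, 2 ≤ j → j ≤ n - 1 → μ j ≤ ν j)
    (h6 : ∀ j, 2 ≤ j → j ≤ n - 1 → ν (j + 1) ≤ μ j)
    (h7 : |μ n| ≤ ν n) :
    ∃! p : List ℕ × List ℕ,
      List.Pairwise (· ≤ ·) p.1 ∧ (∀ x ∈ p.1, 1 ≤ x ∧ x ≤ n - 1) ∧
      List.Pairwise (· ≥ ·) p.2 ∧ (∀ x ∈ p.2, 2 ≤ x ∧ x ≤ n) ∧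
      (∀ j, 2 ≤ j → j ≤ n → ν j = l j + (p.1.count (j - 1) : ℤ)) ∧
      (∀ j, 2 ≤ j → j ≤ n → μ j = ν j - (p.2.count j : ℤ)) :=
  stmt_10_general n l ν μ h2 h4 h5 h7
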